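/- arXiv:2605.27581 — 7 statements merged into one kernel-verified Lean document; each statement's English description precedes it below -/
import Mathlib

section
/- For real parameters k₁ > 0, γ > 0, ℓ > 0 and ξ ∈ (0,ℓ), define 𝔉_ξ(λ) = cos²(λℓ/k₁) + (γ²/k₁²)·sin²(λξ/k₁)·cos²(λ(ℓ−ξ)/k₁) for λ ∈ ℝ. If ξ = (n/(2m+1))ℓ where n and m are positive integers with n odd and n < 2m+1, then inf_{λ∈ℝ} 𝔉_ξ(λ) > 0. -/
/-!
With `ω = ℓ / ((2m+1) k₁)` and `q = 2m+1`, the function is `G (ω λ)` for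
`G t = cos² (q t) + (γ/k₁)² sin² (n t) cos² ((q - n) t)`, which is continuous and `π`-periodic, so its
infimum is a minimum and it suffices that `G` never vanishes. At a zero `q t = (2j+1)π/2` of the
first term, `sin (n t) = 0` would make `n (2j+1)` even and `cos ((q-n) t) = 0` would make
`(q-n)(2j+1)` odd; both fail since `n` and `q` are odd.
-/

open Real

open Function Set in
theorem Function.Periodic.iInf_pos {f : ℝ → ℝ} {c : ℝ} (hp : Periodic f c) (hc : c ≠ 0)
    (hf : Continuous f) (hpos : ∀ x, 0 < f x) : 0 < ⨅ x, f x := by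
  obtain ⟨x, hx⟩ := (hp.compact_of_continuous hc hf).sInf_mem (range_nonempty f)
  rw [iInf, ← hx]
  exact hpos x

theorem Real.cos_sq_add_int_mul_pi (x : ℝ) (k : ℤ) : cos (x + k * π) ^ 2 = cos x ^ 2 := by
  rw [← sq_abs, cos_add_int_mul_pi, abs_mul, abs_neg_one_zpow, one_mul, sq_abs]

theorem Real.sin_sq_add_int_mul_pi (x : ℝ) (k : ℤ) : sin (x + k * π) ^ 2 = sin x ^ 2 := by
  rw [← sq_abs, sin_add_int_mul_pi, abs_mul, abs_neg_one_zpow, one_mul, sq_abs]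

theorem Real.sin_int_mul_ne_zero_of_cos_int_mul_eq_zero {p q : ℤ} (hp : Odd p) {t : ℝ}
    (h : cos (q * t) = 0) : sin (p * t) ≠ 0 := by
  obtain ⟨j, hj⟩ := cos_eq_zero_iff.mp h
  intro hs
  obtain ⟨i, hi⟩ := sin_eq_zero_iff.mp hs
  have hreal : ((p * (2 * j + 1) : ℤ) : ℝ) * π = ((2 * q * i : ℤ) : ℝ) * π := by
    push_cast
    linear_combination -2 * p * hj - 2 * q * hi
  have hint : p * (2 * j + 1) = 2 * q * i := by
    exact_mod_cast mul_right_cancel₀ pi_ne_zero hreal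
  have : Odd (2 * q * i) := hint ▸ hp.mul (odd_two_mul_add_one j)
  exact Int.not_even_iff_odd.mpr this ⟨q * i, by ring⟩

theorem Real.cos_int_mul_ne_zero_of_cos_int_mul_eq_zero {q r : ℤ} (hq : Odd q) (hr : Even r)
    {t : ℝ} (h : cos (q * t) = 0) : cos (r * t) ≠ 0 := by
  obtain ⟨j, hj⟩ := cos_eq_zero_iff.mp h
  intro hc
  obtain ⟨i, hi⟩ := cos_eq_zero_iff.mp hc
  have hreal : ((r * (2 * j + 1) : ℤ) : ℝ) * π = ((q * (2 * i + 1) : ℤ) : ℝ) * π := by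
    push_cast
    linear_combination -2 * r * hj + 2 * q * hi
  have hint : r * (2 * j + 1) = q * (2 * i + 1) := by
    exact_mod_cast mul_right_cancel₀ pi_ne_zero hreal
  have : Odd (r * (2 * j + 1)) := hint ▸ hq.mul (odd_two_mul_add_one i)
  exact Int.not_even_iff_odd.mpr this (hr.mul_right _)

open Function in
theorem Real.iInf_cos_sq_add_mul_sin_sq_mul_cos_sq_pos {p q : ℤ} (hp : Odd p) (hq : Odd q)
    {c : ℝ} (hc : 0 < c) :
    0 < ⨅ t : ℝ, cos (q * t) ^ 2 + c * sin (p * t) ^ 2 * cos ((q - p : ℤ) * t) ^ 2 := by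
  refine Periodic.iInf_pos ?_ pi_ne_zero (by fun_prop) fun t => ?_
  · intro t
    simp only [mul_add, cos_sq_add_int_mul_pi, sin_sq_add_int_mul_pi]
  by_cases h : cos (q * t) = 0
  · have hsin := sin_int_mul_ne_zero_of_cos_int_mul_eq_zero hp h
    have hcos := cos_int_mul_ne_zero_of_cos_int_mul_eq_zero hq (hq.sub_odd hp) h
    rw [h]
    positivity
  · positivity

theorem inf_frakF_pos_general
    (k₁ γ ℓ ξ : ℝ) (hk₁ : 0 < k₁) (hγ : 0 < γ) (hℓ : 0 < ℓ)
    (n m : ℕ) (hodd : Odd n)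
    (hrat : ξ = ((n : ℝ) / (2 * (m : ℝ) + 1)) * ℓ) :
    0 < ⨅ lam : ℝ,
      (Real.cos (lam * ℓ / k₁)) ^ 2
        + (γ ^ 2 / k₁ ^ 2) * (Real.sin (lam * ξ / k₁)) ^ 2
          * (Real.cos (lam * (ℓ - ξ) / k₁)) ^ 2 := by
  set q : ℤ := 2 * m + 1
  have hq : (q : ℝ) = 2 * m + 1 := by push_cast [q]; rfl
  have hq₀ : (q : ℝ) ≠ 0 := by rw [hq]; positivity
  set ω := ℓ / (k₁ * q)
  have hω : ω ≠ 0 := by positivity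
  have hlℓ : ∀ lam, lam * ℓ / k₁ = q * (ω * lam) := fun lam => by
    simp only [ω]; field_simp
  have hlξ : ∀ lam, lam * ξ / k₁ = (n : ℤ) * (ω * lam) := fun lam => by
    rw [hrat, ← hq]; push_cast; simp only [ω]; field_simp
  have hlξ' : ∀ lam, lam * (ℓ - ξ) / k₁ = (q - n : ℤ) * (ω * lam) := fun lam => by
    rw [hrat, ← hq]; push_cast; simp only [ω]; field_simp
  calc 0 < ⨅ t : ℝ, cos (q * t) ^ 2 + γ ^ 2 / k₁ ^ 2 * sin ((n : ℤ) * t) ^ 2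
        * cos ((q - n : ℤ) * t) ^ 2 :=
        iInf_cos_sq_add_mul_sin_sq_mul_cos_sq_pos (Int.odd_coe_nat n |>.mpr hodd)
          (odd_two_mul_add_one _) (by positivity)
    _ = _ := by
      rw [← (mul_left_surjective₀ hω).iInf_comp]
      simp only [hlℓ, hlξ, hlξ']

/-- If `ξ = (n/(2m+1))ℓ` with `n, m` positive integers, `n` odd and
`n < 2m+1`, then the function
`𝔉_ξ(λ) = cos²(λℓ/k₁) + (γ²/k₁²) sin²(λξ/k₁) cos²(λ(ℓ−ξ)/k₁)`
has a positive infimum over `λ ∈ ℝ`. -/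
theorem inf_frakF_pos
    (k₁ γ ℓ ξ : ℝ) (hk₁ : 0 < k₁) (hγ : 0 < γ) (hℓ : 0 < ℓ)
    (hξ : ξ ∈ Set.Ioo 0 ℓ)
    (n m : ℕ) (hn : 0 < n) (hm : 0 < m) (hodd : Odd n) (hlt : n < 2 * m + 1)
    (hrat : ξ = ((n : ℝ) / (2 * (m : ℝ) + 1)) * ℓ) :
    0 < ⨅ lam : ℝ,
      (Real.cos (lam * ℓ / k₁)) ^ 2
        + (γ ^ 2 / k₁ ^ 2) * (Real.sin (lam * ξ / k₁)) ^ 2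
          * (Real.cos (lam * (ℓ - ξ) / k₁)) ^ 2 :=
  inf_frakF_pos_general k₁ γ ℓ ξ hk₁ hγ hℓ n m hodd hrat
end

section
/- For real parameters k₁ > 0, γ > 0, ℓ > 0 and ξ ∈ (0,ℓ), define 𝔉_ξ(λ) = cos²(λℓ/k₁) + (γ²/k₁²)·sin²(λξ/k₁)·cos²(λ(ℓ−ξ)/k₁) for λ ∈ ℝ. If 𝔉_ξ(λ) = 0 for some λ ∈ ℝ, then there exist integers a and b such that (2b−1)ξ = 2aℓ; that is, ξ/ℓ can be written as an even integer divided by an odd integer. -/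
open Real

/-! Writing `t = λ/k₁`, the vanishing of a sum of two nonnegative terms forces `cos (tℓ) = 0`
and `sin (tξ) = 0` (the case `cos (t(ℓ - ξ)) = 0` reduces to this one, since then
`0 = cos (tℓ - tξ) = sin (tℓ) sin (tξ)` with `sin (tℓ) = ±1`). Hence `tℓ = (2b + 1)π/2` and
`tξ = aπ` with `t ≠ 0`, and eliminating `π / t` gives `(2b + 1)ξ = 2aℓ`. -/

lemma sq_add_mul_sq_mul_sq_eq_zero_iff {a b c d : ℝ} (hc : 0 < c) :
    a ^ 2 + c * b ^ 2 * d ^ 2 = 0 ↔ a = 0 ∧ (b = 0 ∨ d = 0) := by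
  rw [add_eq_zero_iff_of_nonneg (sq_nonneg a) (by positivity)]
  simp [hc.ne']

lemma sin_eq_zero_of_cos_eq_zero_of_cos_sub_eq_zero {x y : ℝ} (hx : cos x = 0)
    (hxy : cos (x - y) = 0) : sin y = 0 := by
  have hsin : sin x ≠ 0 := by
    intro h
    simpa [h, hx] using sin_sq_add_cos_sq x
  rw [cos_sub, hx, zero_mul, zero_add] at hxy
  exact (mul_eq_zero.mp hxy).resolve_left hsin

lemma exists_odd_mul_eq_even_mul_of_cos_eq_zero_of_sin_eq_zero {t ℓ ξ : ℝ}
    (hℓ : cos (t * ℓ) = 0) (hξ : sin (t * ξ) = 0) :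
    ∃ a b : ℤ, (2 * (b : ℝ) - 1) * ξ = 2 * (a : ℝ) * ℓ := by
  obtain ⟨b, hb⟩ := cos_eq_zero_iff.mp hℓ
  obtain ⟨a, ha⟩ := sin_eq_zero_iff.mp hξ
  have ht : t ≠ 0 := by
    rintro rfl
    simp at hℓ
  refine ⟨a, b + 1, mul_left_cancel₀ ht ?_⟩
  calc t * ((2 * ((b + 1 : ℤ) : ℝ) - 1) * ξ)
      = (2 * b + 1) * (t * ξ) := by push_cast; ring
    _ = 2 * a * ((2 * b + 1) * π / 2) := by rw [← ha]; ring
    _ = t * (2 * a * ℓ) := by rw [← hb]; ring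

theorem frakF_eq_zero_implies_resonant_location_general
    (k₁ γ ℓ ξ : ℝ) (hk₁ : 0 < k₁) (hγ : 0 < γ)
    (lam : ℝ)
    (hzero : (Real.cos (lam * ℓ / k₁)) ^ 2
        + (γ ^ 2 / k₁ ^ 2) * (Real.sin (lam * ξ / k₁)) ^ 2
          * (Real.cos (lam * (ℓ - ξ) / k₁)) ^ 2 = 0) :
    ∃ a b : ℤ, (2 * (b : ℝ) - 1) * ξ = 2 * (a : ℝ) * ℓ := by
  simp only [mul_div_right_comm lam] at hzero
  set t := lam / k₁
  obtain ⟨hcos, hsin | hcos'⟩ := (sq_add_mul_sq_mul_sq_eq_zero_iff (by positivity)).mp hzero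
  · exact exists_odd_mul_eq_even_mul_of_cos_eq_zero_of_sin_eq_zero hcos hsin
  · rw [mul_sub] at hcos'
    exact exists_odd_mul_eq_even_mul_of_cos_eq_zero_of_sin_eq_zero hcos
      (sin_eq_zero_of_cos_eq_zero_of_cos_sub_eq_zero hcos hcos')

/-- If `𝔉_ξ(λ) = 0` for some real `λ`, then `ξ/ℓ` is an even
integer divided by an odd integer: there are integers `a, b` with
`(2b − 1)ξ = 2aℓ`. -/
theorem frakF_eq_zero_implies_resonant_location
    (k₁ γ ℓ ξ : ℝ) (hk₁ : 0 < k₁) (hγ : 0 < γ) (hℓ : 0 < ℓ)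
    (hξ : ξ ∈ Set.Ioo 0 ℓ)
    (lam : ℝ)
    (hzero : (Real.cos (lam * ℓ / k₁)) ^ 2
        + (γ ^ 2 / k₁ ^ 2) * (Real.sin (lam * ξ / k₁)) ^ 2
          * (Real.cos (lam * (ℓ - ξ) / k₁)) ^ 2 = 0) :
    ∃ a b : ℤ, (2 * (b : ℝ) - 1) * ξ = 2 * (a : ℝ) * ℓ :=
  frakF_eq_zero_implies_resonant_location_general k₁ γ ℓ ξ hk₁ hγ lam hzero
end

section
/- Let k₁ > 0, ℓ > 0, ξ ∈ (0,ℓ) and λ ∈ ℝ. Let p, q : [0,ℓ] → ℂ be differentiable functions satisfying p′(x) + i(λ/k₁)p(x) = 0 and q′(x) − i(λ/k₁)q(x) = 0 for all x ∈ [0,ℓ], together with the boundary conditions p(0) + q(0) = 0 and p(ℓ) − q(ℓ) = 0, the interior condition p(ξ) + q(ξ) = 0, and p(0) ≠ 0. Then p(x) = p(0)e^{−iλx/k₁} and q(x) = −p(0)e^{iλx/k₁} for all x ∈ [0,ℓ], and there exist integers m and n such that λ = (m + 1/2)·(k₁π/ℓ) and ξ = (2n/(2m+1))·ℓ. -/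
/-!
Each invariant solves a scalar linear ODE, so `p x = p 0 * e^{-iλx/k₁}` and
`q x = q 0 * e^{iλx/k₁}` with `q 0 = -p 0`. Then `p - q = 2 p 0 cos (λx/k₁)` and
`p + q = -2i p 0 sin (λx/k₁)`, so the conditions at `ℓ` and `ξ` force `cos (λℓ/k₁) = 0` and
`sin (λξ/k₁) = 0`; the zero sets of cosine and sine supply `m` and `n`.
-/

open Complex

theorem eq_mul_exp_of_hasDerivAt_eq_mul {b : ℝ} {c : ℂ} {f : ℝ → ℂ}
    (hf : ∀ x ∈ Set.Icc 0 b, HasDerivAt f (c * f x) x) :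
    ∀ x ∈ Set.Icc 0 b, f x = f 0 * exp (c * x) := by
  set g : ℝ → ℂ := fun x => f x * exp (-c * x)
  have hg : ∀ x ∈ Set.Icc 0 b, HasDerivAt g 0 x := fun x hx => by
    have he := ((hasDerivAt_id (x : ℂ)).const_mul (-c)).comp_ofReal.cexp
    exact ((hf x hx).mul he).congr_deriv (by ring)
  have hconst : ∀ x ∈ Set.Icc 0 b, g x = g 0 :=
    constant_of_has_deriv_right_zero (fun x hx => (hg x hx).continuousAt.continuousWithinAt)
      fun x hx => (hg x (Set.mem_Icc_of_Ico hx)).hasDerivWithinAt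
  intro x hx
  have h : f x * exp (-c * x) = f 0 := by simpa [g] using hconst x hx
  rw [← h, mul_assoc, ← exp_add]
  simp

theorem mul_exp_neg_sub_neg_mul_exp (a : ℂ) (θ : ℝ) :
    a * exp (-(θ * I)) - -a * exp (θ * I) = 2 * a * Real.cos θ := by
  rw [← neg_mul, exp_mul_I, exp_mul_I, cos_neg, sin_neg, ofReal_cos]
  ring

theorem mul_exp_neg_add_neg_mul_exp (a : ℂ) (θ : ℝ) :
    a * exp (-(θ * I)) + -a * exp (θ * I) = -2 * I * a * Real.sin θ := by
  rw [← neg_mul, exp_mul_I, exp_mul_I, cos_neg, sin_neg, ofReal_sin]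
  ring

theorem I_mul_mul_div_eq_ofReal_mul_I (lam x k : ℝ) :
    I * lam * x / k = ((lam * x / k : ℝ) : ℂ) * I := by
  push_cast
  ring

theorem exists_int_of_cos_eq_zero_of_sin_eq_zero {k ℓ ξ lam : ℝ} (hk : k ≠ 0) (hℓ : ℓ ≠ 0)
    (hcos : Real.cos (lam * ℓ / k) = 0) (hsin : Real.sin (lam * ξ / k) = 0) :
    ∃ m n : ℤ, lam = (m + 1 / 2) * (k * Real.pi / ℓ) ∧ ξ = (2 * n / (2 * m + 1)) * ℓ := by
  obtain ⟨m, hm⟩ := Real.cos_eq_zero_iff.1 hcos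
  obtain ⟨n, hn⟩ := Real.sin_eq_zero_iff.1 hsin
  have hodd : (2 * m + 1 : ℝ) ≠ 0 := by norm_cast; omega
  have hlam : lam = (m + 1 / 2) * (k * Real.pi / ℓ) := by
    field_simp at hm ⊢
    linear_combination hm
  refine ⟨m, n, hlam, ?_⟩
  rw [hlam] at hn
  field_simp at hn
  rw [div_mul_eq_mul_div, eq_div_iff hodd]
  linear_combination -hn

/-- Riemann invariants of the damped wave equation: solutions of
`p′ + i(λ/k₁)p = 0`, `q′ − i(λ/k₁)q = 0` on `[0,ℓ]` with `p(0)+q(0)=0`,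
`p(ℓ)−q(ℓ)=0`, `p(ξ)+q(ξ)=0` and `p(0) ≠ 0` are explicit exponentials, and
`λ = (m+1/2)k₁π/ℓ` while `ξ = (2n/(2m+1))ℓ` for some integers `m, n`. -/
theorem riemann_invariant_eigenvalue_classification
    (k₁ ℓ ξ lam : ℝ) (hk₁ : 0 < k₁) (hℓ : 0 < ℓ) (hξ : ξ ∈ Set.Ioo 0 ℓ)
    (p q : ℝ → ℂ)
    (hp : ∀ x ∈ Set.Icc 0 ℓ,
      HasDerivAt p (-(Complex.I * ((lam : ℂ) / (k₁ : ℂ))) * p x) x)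
    (hq : ∀ x ∈ Set.Icc 0 ℓ,
      HasDerivAt q ((Complex.I * ((lam : ℂ) / (k₁ : ℂ))) * q x) x)
    (hbc0 : p 0 + q 0 = 0)
    (hbcℓ : p ℓ - q ℓ = 0)
    (hbcξ : p ξ + q ξ = 0)
    (hp0 : p 0 ≠ 0) :
    (∀ x ∈ Set.Icc 0 ℓ,
        p x = p 0 * Complex.exp (-(Complex.I * (lam : ℂ) * (x : ℂ)) / (k₁ : ℂ)) ∧
        q x = -(p 0) * Complex.exp ((Complex.I * (lam : ℂ) * (x : ℂ)) / (k₁ : ℂ))) ∧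
    ∃ m n : ℤ,
      lam = ((m : ℝ) + 1 / 2) * (k₁ * Real.pi / ℓ) ∧
      ξ = (2 * (n : ℝ) / (2 * (m : ℝ) + 1)) * ℓ := by
  have hpx : ∀ x ∈ Set.Icc 0 ℓ, p x = p 0 * exp (-(I * lam * x) / k₁) := fun x hx => by
    rw [eq_mul_exp_of_hasDerivAt_eq_mul hp x hx]
    ring_nf
  have hqx : ∀ x ∈ Set.Icc 0 ℓ, q x = -p 0 * exp (I * lam * x / k₁) := fun x hx => by
    rw [eq_mul_exp_of_hasDerivAt_eq_mul hq x hx, eq_neg_of_add_eq_zero_right hbc0]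
    ring_nf
  have hcos : Real.cos (lam * ℓ / k₁) = 0 := by
    have h := hbcℓ
    rw [hpx ℓ ⟨hℓ.le, le_rfl⟩, hqx ℓ ⟨hℓ.le, le_rfl⟩, neg_div, I_mul_mul_div_eq_ofReal_mul_I,
      mul_exp_neg_sub_neg_mul_exp] at h
    exact_mod_cast (mul_eq_zero.1 h).resolve_left (by simp [hp0])
  have hsin : Real.sin (lam * ξ / k₁) = 0 := by
    have h := hbcξ
    rw [hpx ξ (Set.Ioo_subset_Icc_self hξ), hqx ξ (Set.Ioo_subset_Icc_self hξ), neg_div,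
      I_mul_mul_div_eq_ofReal_mul_I, mul_exp_neg_add_neg_mul_exp] at h
    exact_mod_cast (mul_eq_zero.1 h).resolve_left (by simp [hp0])
  exact ⟨fun x hx => ⟨hpx x hx, hqx x hx⟩,
    exists_int_of_cos_eq_zero_of_sin_eq_zero hk₁.ne' hℓ.ne' hcos hsin⟩
end

section
/- Let k₁ > 0, γ > 0, ℓ > 0 and ξ ∈ (0,ℓ). Let p₁, q₁ : [0,ξ] → ℝ and p₂, q₂ : [ξ,ℓ] → ℝ be continuously differentiable functions satisfying: q₁(0) + p₁(0) = 0; q₂(ℓ) − p₂(ℓ) = 0; the transmission conditions q₂(ξ) + p₂(ξ) = q₁(ξ) + p₁(ξ) and (q₂(ξ) − q₁(ξ)) + (p₁(ξ) − p₂(ξ)) = −(γ/k₁)(p₂(ξ) + q₂(ξ)). Then ∫₀^ξ (k₁ p₁′(x)p₁(x) − k₁ q₁′(x)q₁(x)) dx + ∫_ξ^ℓ (k₁ p₂′(x)p₂(x) − k₁ q₂′(x)q₂(x)) dx = −(γ/2)·(p₂(ξ) + q₂(ξ))². -/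
/-! Each component contributes a boundary flux by the fundamental theorem of calculus, since
`k f' f - k g' g` is the derivative of `k/2 (f² - g²)`. The outer boundary conditions make
`p² - q² = (p + q)(p - q)` vanish at `0` and `ℓ`; at `ξ` the first transmission condition pulls out
the common factor `p + q`, and the second one turns the jump of `p - q` into `-(γ/k₁)(p + q)`. -/

open Set

theorem integral_const_mul_deriv_mul_self_sub {k a b : ℝ} {f f' g g' : ℝ → ℝ}
    (hf : ∀ x ∈ uIcc a b, HasDerivAt f (f' x) x) (hg : ∀ x ∈ uIcc a b, HasDerivAt g (g' x) x)
    (hf' : ContinuousOn f' (uIcc a b)) (hg' : ContinuousOn g' (uIcc a b)) :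
    ∫ x in a..b, (k * f' x * f x - k * g' x * g x)
      = k / 2 * ((f b ^ 2 - g b ^ 2) - (f a ^ 2 - g a ^ 2)) := by
  have hfc : ContinuousOn f (uIcc a b) := fun x hx => (hf x hx).continuousAt.continuousWithinAt
  have hgc : ContinuousOn g (uIcc a b) := fun x hx => (hg x hx).continuousAt.continuousWithinAt
  rw [intervalIntegral.integral_eq_sub_of_hasDerivAt (f := fun x => k / 2 * (f x ^ 2 - g x ^ 2))
    (fun x hx => ?deriv) ?integrable]
  case deriv =>
    exact ((((hf x hx).pow 2).sub ((hg x hx).pow 2)).const_mul (k / 2)).congr_deriv (by ring)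
  case integrable =>
    exact (((continuousOn_const.mul hf').mul hfc).sub
      ((continuousOn_const.mul hg').mul hgc)).intervalIntegrable
  ring

theorem dissipativity_identity_general
    (k₁ γ ℓ ξ : ℝ) (hk₁ : 0 < k₁)
    (hξ : ξ ∈ Set.Ioo 0 ℓ)
    (p₁ q₁ p₂ q₂ dp₁ dq₁ dp₂ dq₂ : ℝ → ℝ)
    (hp₁ : ∀ x ∈ Set.Icc 0 ξ, HasDerivAt p₁ (dp₁ x) x)
    (hq₁ : ∀ x ∈ Set.Icc 0 ξ, HasDerivAt q₁ (dq₁ x) x)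
    (hp₂ : ∀ x ∈ Set.Icc ξ ℓ, HasDerivAt p₂ (dp₂ x) x)
    (hq₂ : ∀ x ∈ Set.Icc ξ ℓ, HasDerivAt q₂ (dq₂ x) x)
    (hcp₁ : ContinuousOn dp₁ (Set.Icc 0 ξ))
    (hcq₁ : ContinuousOn dq₁ (Set.Icc 0 ξ))
    (hcp₂ : ContinuousOn dp₂ (Set.Icc ξ ℓ))
    (hcq₂ : ContinuousOn dq₂ (Set.Icc ξ ℓ))
    (hbc0 : q₁ 0 + p₁ 0 = 0)
    (hbcℓ : q₂ ℓ - p₂ ℓ = 0)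
    (htrans1 : q₂ ξ + p₂ ξ = q₁ ξ + p₁ ξ)
    (htrans2 : (q₂ ξ - q₁ ξ) + (p₁ ξ - p₂ ξ) = -(γ / k₁) * (p₂ ξ + q₂ ξ)) :
    (∫ x in (0 : ℝ)..ξ, (k₁ * dp₁ x * p₁ x - k₁ * dq₁ x * q₁ x))
      + (∫ x in ξ..ℓ, (k₁ * dp₂ x * p₂ x - k₁ * dq₂ x * q₂ x))
      = -(γ / 2) * (p₂ ξ + q₂ ξ) ^ 2 := by
  obtain ⟨h0ξ, hξℓ⟩ := hξ
  rw [← uIcc_of_le h0ξ.le] at hp₁ hq₁ hcp₁ hcq₁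
  rw [← uIcc_of_le hξℓ.le] at hp₂ hq₂ hcp₂ hcq₂
  rw [integral_const_mul_deriv_mul_self_sub hp₁ hq₁ hcp₁ hcq₁,
    integral_const_mul_deriv_mul_self_sub hp₂ hq₂ hcp₂ hcq₂]
  have hjump : k₁ * ((q₂ ξ - q₁ ξ) + (p₁ ξ - p₂ ξ)) = -γ * (p₂ ξ + q₂ ξ) := by
    rw [htrans2]
    field_simp
  linear_combination (k₁ / 2 * (q₁ 0 - p₁ 0)) * hbc0 - (k₁ / 2 * (q₂ ℓ + p₂ ℓ)) * hbcℓ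
    - (k₁ / 2 * (p₁ ξ - q₁ ξ)) * htrans1 + (p₂ ξ + q₂ ξ) / 2 * hjump

/-- Dissipativity identity for the first-order operator
`𝐀(p,q) = (k₁ p_x, −k₁ q_x)` with pointwise damping at `ξ`: for C¹ Riemann
invariants satisfying the boundary and transmission conditions,
`((p,q), 𝐀(p,q))_{L²} = −(γ/2)(p₂(ξ)+q₂(ξ))²`. -/
theorem dissipativity_identity
    (k₁ γ ℓ ξ : ℝ) (hk₁ : 0 < k₁) (hγ : 0 < γ) (hℓ : 0 < ℓ)
    (hξ : ξ ∈ Set.Ioo 0 ℓ)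
    (p₁ q₁ p₂ q₂ dp₁ dq₁ dp₂ dq₂ : ℝ → ℝ)
    (hp₁ : ∀ x ∈ Set.Icc 0 ξ, HasDerivAt p₁ (dp₁ x) x)
    (hq₁ : ∀ x ∈ Set.Icc 0 ξ, HasDerivAt q₁ (dq₁ x) x)
    (hp₂ : ∀ x ∈ Set.Icc ξ ℓ, HasDerivAt p₂ (dp₂ x) x)
    (hq₂ : ∀ x ∈ Set.Icc ξ ℓ, HasDerivAt q₂ (dq₂ x) x)
    (hcp₁ : ContinuousOn dp₁ (Set.Icc 0 ξ))
    (hcq₁ : ContinuousOn dq₁ (Set.Icc 0 ξ))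
    (hcp₂ : ContinuousOn dp₂ (Set.Icc ξ ℓ))
    (hcq₂ : ContinuousOn dq₂ (Set.Icc ξ ℓ))
    (hbc0 : q₁ 0 + p₁ 0 = 0)
    (hbcℓ : q₂ ℓ - p₂ ℓ = 0)
    (htrans1 : q₂ ξ + p₂ ξ = q₁ ξ + p₁ ξ)
    (htrans2 : (q₂ ξ - q₁ ξ) + (p₁ ξ - p₂ ξ) = -(γ / k₁) * (p₂ ξ + q₂ ξ)) :
    (∫ x in (0 : ℝ)..ξ, (k₁ * dp₁ x * p₁ x - k₁ * dq₁ x * q₁ x))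
      + (∫ x in ξ..ℓ, (k₁ * dp₂ x * p₂ x - k₁ * dq₂ x * q₂ x))
      = -(γ / 2) * (p₂ ξ + q₂ ξ) ^ 2 :=
  dissipativity_identity_general k₁ γ ℓ ξ hk₁ hξ p₁ q₁ p₂ q₂ dp₁ dq₁ dp₂ dq₂ hp₁ hq₁ hp₂ hq₂ hcp₁
    hcq₁ hcp₂ hcq₂ hbc0 hbcℓ htrans1 htrans2
end

section
/- Let α > 0, α₀ > 0, ℓ > 0 and λ ∈ ℝ with λ ≠ 0. Let u : [0,ℓ] → ℝ be a four times continuously differentiable function, not identically zero, satisfying α u′′′′(x) − α₀ u′′(x) = λ² u(x) for all x ∈ [0,ℓ], together with the boundary conditions u(0) = 0, u′′(0) = 0, u′(ℓ) = 0, u′′′(ℓ) = 0. Then there exist a natural number k and a real constant A ≠ 0 such that u(x) = A·sin((2k+1)πx/(2ℓ)) for all x ∈ [0,ℓ], and λ² = α·((2k+1)π/(2ℓ))⁴ + α₀·((2k+1)π/(2ℓ))². -/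
/-!
As `λ² > 0`, the operator factors as `α D⁴ - α₀ D² - λ² = α (D² + N) (D² - M)` with
`N, M > 0` (`N` a positive root of `α N² + α₀ N = λ²`, `M = N + α₀ / α`). So `w = u'' + N u`
solves `w'' = M w` with `w(0) = w'(ℓ) = 0`; conservation of `w'² - M w²` then gives
`w'(0) = 0`, and `w ≡ 0` by uniqueness for the Cauchy problem. Hence `u'' = -N u` and
`u(0) = 0`, so `u = A sin (√N x)`, and `u'(ℓ) = 0` forces `cos (√N ℓ) = 0`.
-/

open Set Real

lemma exists_pos_mul_sq_add_mul_eq {a b c : ℝ} (ha : 0 < a) (hc : 0 < c) :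
    ∃ x > 0, a * x ^ 2 + b * x = c := by
  set D := √(b ^ 2 + 4 * a * c)
  have hD : D ^ 2 = b ^ 2 + 4 * a * c := sq_sqrt (by positivity)
  have hbD : b < D := by nlinarith [sqrt_nonneg (b ^ 2 + 4 * a * c), mul_pos ha hc]
  refine ⟨(D - b) / (2 * a), div_pos (by linarith) (by positivity), ?_⟩
  field_simp
  linear_combination hD

lemma ODE_solution_unique_of_hasDerivAt_mul {a b c : ℝ} {f f₁ g g₁ : ℝ → ℝ}
    (hf : ∀ x ∈ Icc a b, HasDerivAt f (f₁ x) x)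
    (hf₁ : ∀ x ∈ Icc a b, HasDerivAt f₁ (c * f x) x)
    (hg : ∀ x ∈ Icc a b, HasDerivAt g (g₁ x) x)
    (hg₁ : ∀ x ∈ Icc a b, HasDerivAt g₁ (c * g x) x)
    (ha : f a = g a) (ha₁ : f₁ a = g₁ a) :
    EqOn f g (Icc a b) ∧ EqOn f₁ g₁ (Icc a b) := by
  let L : ℝ × ℝ →L[ℝ] ℝ × ℝ :=
    (ContinuousLinearMap.snd ℝ ℝ ℝ).prod (c • ContinuousLinearMap.fst ℝ ℝ ℝ)
  have hF : ∀ x ∈ Icc a b, HasDerivAt (fun x => (f x, f₁ x)) (L (f x, f₁ x)) x :=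
    fun x hx => (hf x hx).prodMk (hf₁ x hx)
  have hG : ∀ x ∈ Icc a b, HasDerivAt (fun x => (g x, g₁ x)) (L (g x, g₁ x)) x :=
    fun x hx => (hg x hx).prodMk (hg₁ x hx)
  have key : EqOn (fun x => (f x, f₁ x)) (fun x => (g x, g₁ x)) (Icc a b) :=
    ODE_solution_unique (v := fun _ => L) (fun _ => L.lipschitz)
      (fun x hx => (hF x hx).continuousAt.continuousWithinAt)
      (fun x hx => (hF x (Ico_subset_Icc_self hx)).hasDerivWithinAt)
      (fun x hx => (hG x hx).continuousAt.continuousWithinAt)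
      (fun x hx => (hG x (Ico_subset_Icc_self hx)).hasDerivWithinAt)
      (by simp [ha, ha₁])
  exact ⟨fun x hx => congrArg Prod.fst (key hx), fun x hx => congrArg Prod.snd (key hx)⟩

lemma eqOn_zero_of_mixed_boundary_conditions {a b c : ℝ} {w w₁ : ℝ → ℝ}
    (hab : a ≤ b) (hc : 0 ≤ c)
    (hw : ∀ x ∈ Icc a b, HasDerivAt w (w₁ x) x)
    (hw₁ : ∀ x ∈ Icc a b, HasDerivAt w₁ (c * w x) x)
    (ha : w a = 0) (hb : w₁ b = 0) :
    EqOn w 0 (Icc a b) := by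
  have hE : ∀ x ∈ Icc a b, HasDerivAt (fun x => w₁ x ^ 2 - c * w x ^ 2) 0 x := fun x hx =>
    (((hw₁ x hx).pow 2).sub (((hw x hx).pow 2).const_mul c)).congr_deriv (by ring)
  have hEb := constant_of_has_deriv_right_zero
    (fun x hx => (hE x hx).continuousAt.continuousWithinAt)
    (fun x hx => (hE x (Ico_subset_Icc_self hx)).hasDerivWithinAt) b ⟨hab, le_rfl⟩
  simp only [ha, hb] at hEb
  have ha₁ : w₁ a = 0 := by nlinarith [sq_nonneg (w₁ a), mul_nonneg hc (sq_nonneg (w b))]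
  exact (ODE_solution_unique_of_hasDerivAt_mul (g := fun _ => 0) (g₁ := fun _ => 0) hw hw₁
    (fun x _ => hasDerivAt_const x 0) (fun x _ => by simpa using hasDerivAt_const x (0 : ℝ))
    ha ha₁).1

lemma eqOn_mul_sin_of_hasDerivAt {b n : ℝ} {u u₁ : ℝ → ℝ} (hn : n ≠ 0)
    (hu : ∀ x ∈ Icc 0 b, HasDerivAt u (u₁ x) x)
    (hu₁ : ∀ x ∈ Icc 0 b, HasDerivAt u₁ (-n ^ 2 * u x) x) (h0 : u 0 = 0) :
    EqOn u (fun x => u₁ 0 / n * sin (n * x)) (Icc 0 b) ∧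
      EqOn u₁ (fun x => u₁ 0 * cos (n * x)) (Icc 0 b) := by
  have hlin (x : ℝ) : HasDerivAt (fun x => n * x) n x := by
    simpa using (hasDerivAt_id x).const_mul n
  refine ODE_solution_unique_of_hasDerivAt_mul hu hu₁ (fun x _ => ?_) (fun x _ => ?_)
    (by simp [h0]) (by simp)
  · exact (((hasDerivAt_sin _).comp x (hlin x)).const_mul _).congr_deriv (by field_simp)
  · exact (((hasDerivAt_cos _).comp x (hlin x)).const_mul _).congr_deriv (by field_simp)

lemma exists_nat_eq_of_cos_eq_zero {x : ℝ} (hx : 0 < x) (h : cos x = 0) :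
    ∃ k : ℕ, x = (2 * k + 1) * π / 2 := by
  obtain ⟨k, rfl⟩ := cos_eq_zero_iff.mp h
  have hk : 0 ≤ k := by
    by_contra! hk
    have : (k : ℝ) ≤ -1 := by exact_mod_cast Int.le_sub_one_of_lt hk
    nlinarith [pi_pos]
  refine ⟨k.toNat, ?_⟩
  rw [show ((k.toNat : ℕ) : ℝ) = k by exact_mod_cast Int.toNat_of_nonneg hk]

theorem beam_eigenfunction_classification_general
    (α α₀ ℓ lam : ℝ) (hα : 0 < α) (hℓ : 0 < ℓ) (hlam : lam ≠ 0)
    (u u₁ u₂ u₃ u₄ : ℝ → ℝ)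
    (hu₁ : ∀ x ∈ Set.Icc 0 ℓ, HasDerivAt u (u₁ x) x)
    (hu₂ : ∀ x ∈ Set.Icc 0 ℓ, HasDerivAt u₁ (u₂ x) x)
    (hu₃ : ∀ x ∈ Set.Icc 0 ℓ, HasDerivAt u₂ (u₃ x) x)
    (hu₄ : ∀ x ∈ Set.Icc 0 ℓ, HasDerivAt u₃ (u₄ x) x)
    (hne : ∃ x ∈ Set.Icc 0 ℓ, u x ≠ 0)
    (hode : ∀ x ∈ Set.Icc 0 ℓ, α * u₄ x - α₀ * u₂ x = lam ^ 2 * u x)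
    (hbc1 : u 0 = 0) (hbc2 : u₂ 0 = 0) (hbc3 : u₁ ℓ = 0) (hbc4 : u₃ ℓ = 0) :
    ∃ (k : ℕ) (A : ℝ), A ≠ 0 ∧
      (∀ x ∈ Set.Icc 0 ℓ,
        u x = A * Real.sin ((2 * (k : ℝ) + 1) * Real.pi * x / (2 * ℓ))) ∧
      lam ^ 2 = α * ((2 * (k : ℝ) + 1) * Real.pi / (2 * ℓ)) ^ 4
        + α₀ * ((2 * (k : ℝ) + 1) * Real.pi / (2 * ℓ)) ^ 2 := by
  obtain ⟨N, hN, hNlam⟩ :=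
    exists_pos_mul_sq_add_mul_eq (b := α₀) hα (by positivity : 0 < lam ^ 2)
  have hM : 0 ≤ N + α₀ / α := by
    have : α * N * (N + α₀ / α) = lam ^ 2 := by field_simp; linear_combination hNlam
    nlinarith [mul_pos hα hN, sq_pos_of_ne_zero hlam]
  have hw := eqOn_zero_of_mixed_boundary_conditions (w := fun x => u₂ x + N * u x) hℓ.le hM
    (fun x hx => (hu₃ x hx).add ((hu₁ x hx).const_mul N))
    (fun x hx => ((hu₄ x hx).add ((hu₂ x hx).const_mul N)).congr_deriv
      (by field_simp; linear_combination hode x hx - u x * hNlam))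
    (by simp [hbc1, hbc2]) (by simp [hbc3, hbc4])
  set n := √N
  have hn : 0 < n := sqrt_pos.2 hN
  have hnN : n ^ 2 = N := sq_sqrt hN.le
  obtain ⟨hu_sin, hu₁_cos⟩ := eqOn_mul_sin_of_hasDerivAt hn.ne' hu₁ (fun x hx =>
    (hu₂ x hx).congr_deriv (by rw [hnN]; linarith [show u₂ x + N * u x = 0 from hw hx])) hbc1
  have hA : u₁ 0 / n ≠ 0 := by
    rintro hA
    obtain ⟨x, hx, hux⟩ := hne
    exact hux (by simp [hu_sin hx, hA])
  have hcos : cos (n * ℓ) = 0 := by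
    have := hu₁_cos ⟨hℓ.le, le_rfl⟩
    rw [hbc3] at this
    exact (mul_eq_zero.mp this.symm).resolve_left (by rintro h; simp [h] at hA)
  obtain ⟨k, hk⟩ := exists_nat_eq_of_cos_eq_zero (mul_pos hn hℓ) hcos
  have hnk : n = (2 * k + 1) * π / (2 * ℓ) := by field_simp; linarith
  refine ⟨k, u₁ 0 / n, hA, fun x hx => by rw [hu_sin hx, hnk]; ring_nf, ?_⟩
  rw [← hnk, ← hNlam, ← hnN]
  ring

/-- Classification of eigenfunctions of the Euler–Bernoulli beam
operator `u ↦ α u′′′′ − α₀ u′′` with `u(0) = u″(0) = 0`, `u′(ℓ) = u‴(ℓ) = 0`: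
every nonzero eigenfunction is a multiple of `sin((2k+1)πx/(2ℓ))` and
`λ² = α((2k+1)π/(2ℓ))⁴ + α₀((2k+1)π/(2ℓ))²`. -/
theorem beam_eigenfunction_classification
    (α α₀ ℓ lam : ℝ) (hα : 0 < α) (hα₀ : 0 < α₀) (hℓ : 0 < ℓ) (hlam : lam ≠ 0)
    (u u₁ u₂ u₃ u₄ : ℝ → ℝ)
    (hu₁ : ∀ x ∈ Set.Icc 0 ℓ, HasDerivAt u (u₁ x) x)
    (hu₂ : ∀ x ∈ Set.Icc 0 ℓ, HasDerivAt u₁ (u₂ x) x)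
    (hu₃ : ∀ x ∈ Set.Icc 0 ℓ, HasDerivAt u₂ (u₃ x) x)
    (hu₄ : ∀ x ∈ Set.Icc 0 ℓ, HasDerivAt u₃ (u₄ x) x)
    (hcont : ContinuousOn u₄ (Set.Icc 0 ℓ))
    (hne : ∃ x ∈ Set.Icc 0 ℓ, u x ≠ 0)
    (hode : ∀ x ∈ Set.Icc 0 ℓ, α * u₄ x - α₀ * u₂ x = lam ^ 2 * u x)
    (hbc1 : u 0 = 0) (hbc2 : u₂ 0 = 0) (hbc3 : u₁ ℓ = 0) (hbc4 : u₃ ℓ = 0) :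
    ∃ (k : ℕ) (A : ℝ), A ≠ 0 ∧
      (∀ x ∈ Set.Icc 0 ℓ,
        u x = A * Real.sin ((2 * (k : ℝ) + 1) * Real.pi * x / (2 * ℓ))) ∧
      lam ^ 2 = α * ((2 * (k : ℝ) + 1) * Real.pi / (2 * ℓ)) ^ 4
        + α₀ * ((2 * (k : ℝ) + 1) * Real.pi / (2 * ℓ)) ^ 2 :=
  beam_eigenfunction_classification_general α α₀ ℓ lam hα hℓ hlam u u₁ u₂ u₃ u₄ hu₁ hu₂ hu₃ hu₄ hne
    hode hbc1 hbc2 hbc3 hbc4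
end

section
/- Let H be a Banach space and let (T(t))_{t≥0} be a family of bounded linear operators on H such that T(0) = I, the map t ↦ T(t)x is continuous from [0,∞) to H for every x ∈ H, and sup_{t≥0} ‖T(t)‖ ≤ c₀ for some constant c₀ > 0. Let F : H → H be globally Lipschitz continuous with Lipschitz constant K₀. Then for every U₀ ∈ H there exists a unique continuous function U : [0,∞) → H satisfying the integral equation U(t) = T(t)U₀ + ∫₀ᵗ T(t−s) F(U(s)) ds for all t ≥ 0, where the integral is a Bochner integral. -/
/-!
Extend `T` to all of `ℝ` by `t ↦ T (max t 0)`. With `L = c₀ K₀ + 1`, the Picard map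
`v ↦ T(·) U₀ + ∫₀^· T(· - s) F(v s) ds` is a `c₀ K₀ / L`-contraction for Bielecki's weighted
norm `sup_t e^{-L t} ‖v t‖`, since `∫₀ᵗ e^{L s} ds ≤ e^{L t} / L`; its fixed point is a global
mild solution. The difference `D` of two mild solutions satisfies `D t ≤ c₀ K₀ ∫₀ᵗ D`, so
`D = 0` by Grönwall's inequality.
-/

open Set MeasureTheory Real
open scoped NNReal BoundedContinuousFunction

/-- Banach's fixed point theorem for the weighted sup norm `sup_x ‖v x‖ / w x`: conjugating by `w`
turns `Φ` into a contraction of `X →ᵇ E`. -/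
theorem exists_continuous_fixedPoint_of_weighted_contraction
    {X E : Type*} [TopologicalSpace X] [NormedAddCommGroup E] [NormedSpace ℝ E] [CompleteSpace E]
    {w : X → ℝ} (hw : Continuous w) (hw0 : ∀ x, 0 < w x)
    {Φ : (X → E) → X → E} {κ : ℝ≥0} (hκ : κ < 1)
    (hΦc : ∀ v, Continuous v → Continuous (Φ v))
    (hΦ0 : ∃ M, ∀ x, ‖Φ 0 x‖ ≤ M * w x)
    (hΦlip : ∀ v₁ v₂, Continuous v₁ → Continuous v₂ → ∀ M,
      (∀ x, ‖v₁ x - v₂ x‖ ≤ M * w x) → ∀ x, ‖Φ v₁ x - Φ v₂ x‖ ≤ κ * M * w x) :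
    ∃ v, Continuous v ∧ Φ v = v := by
  obtain ⟨M, hM⟩ := hΦ0
  have hwg : ∀ g : X →ᵇ E, Continuous fun y => w y • g y := fun g => hw.smul g.continuous
  have hwdist : ∀ (g₁ g₂ : X →ᵇ E) y, ‖w y • g₁ y - w y • g₂ y‖ ≤ dist g₁ g₂ * w y := by
    intro g₁ g₂ y
    rw [← smul_sub, norm_smul, norm_of_nonneg (hw0 y).le, mul_comm, ← dist_eq_norm]
    exact mul_le_mul_of_nonneg_right (g₁.dist_coe_le_dist y) (hw0 y).le
  have hbound : ∀ (g : X →ᵇ E) x, ‖(w x)⁻¹ • Φ (fun y => w y • g y) x‖ ≤ M + κ * ‖g‖ := by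
    intro g x
    have hlip := hΦlip _ 0 (hwg g) continuous_zero ‖g‖ (fun y => by
      simpa using hwdist g 0 y) x
    rw [norm_smul, norm_inv, norm_of_nonneg (hw0 x).le, inv_mul_le_iff₀ (hw0 x)]
    calc ‖Φ (fun y => w y • g y) x‖ ≤ ‖Φ 0 x‖ + ‖Φ (fun y => w y • g y) x - Φ 0 x‖ :=
          norm_le_insert' _ _
      _ ≤ M * w x + κ * ‖g‖ * w x := add_le_add (hM x) hlip
      _ = w x * (M + κ * ‖g‖) := by ring
  let Ψ : (X →ᵇ E) → (X →ᵇ E) := fun g =>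
    .ofNormedAddCommGroup (fun x => (w x)⁻¹ • Φ (fun y => w y • g y) x)
      ((hw.inv₀ fun x => (hw0 x).ne').smul (hΦc _ (hwg g))) _ (hbound g)
  have hΨ : ContractingWith κ Ψ := by
    refine ⟨hκ, LipschitzWith.of_dist_le_mul fun g₁ g₂ => ?_⟩
    refine (BoundedContinuousFunction.dist_le (by positivity)).2 fun x => ?_
    have hlip := hΦlip _ _ (hwg g₁) (hwg g₂) _ (hwdist g₁ g₂) x
    simp only [Ψ, BoundedContinuousFunction.coe_ofNormedAddCommGroup]
    rw [dist_eq_norm, ← smul_sub, norm_smul, norm_inv, norm_of_nonneg (hw0 x).le,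
      inv_mul_le_iff₀ (hw0 x)]
    linarith
  refine ⟨fun y => w y • hΨ.fixedPoint Ψ y, hwg _, funext fun x => ?_⟩
  have hfix := congr($(hΨ.fixedPoint_isFixedPt (f := Ψ)) x)
  simp only [Ψ, BoundedContinuousFunction.coe_ofNormedAddCommGroup] at hfix
  rw [← hfix, smul_smul, mul_inv_cancel₀ (hw0 x).ne', one_smul]

theorem eqOn_zero_of_le_mul_integral {D : ℝ → ℝ} {K : ℝ} (hD : Continuous D)
    (hD0 : ∀ t, 0 ≤ t → 0 ≤ D t) (hle : ∀ t, 0 ≤ t → D t ≤ K * ∫ s in (0 : ℝ)..t, D s) :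
    EqOn D 0 (Ici 0) := by
  set I : ℝ → ℝ := fun t => ∫ s in (0 : ℝ)..t, D s
  have hI : ∀ t, HasDerivAt I (D t) t := fun t =>
    intervalIntegral.integral_hasDerivAt_right (hD.intervalIntegrable _ _)
      (hD.stronglyMeasurableAtFilter _ _) hD.continuousAt
  have hI0 : ∀ t, 0 ≤ t → 0 ≤ I t := fun t ht =>
    intervalIntegral.integral_nonneg ht fun s hs => hD0 s hs.1
  intro t (ht : 0 ≤ t)
  have hIt : I t = 0 := by
    have := norm_le_gronwallBound_of_norm_deriv_right_le (δ := 0) (ε := 0) (K := K)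
      (fun s _ => (hI s).continuousAt.continuousWithinAt) (fun s _ => (hI s).hasDerivWithinAt)
      (by simp [I]) (fun s hs => by
        rw [norm_of_nonneg (hD0 s hs.1), norm_of_nonneg (hI0 s hs.1), add_zero]
        exact hle s hs.1) t ⟨ht, le_rfl⟩
    rw [gronwallBound_ε0_δ0, norm_of_nonneg (hI0 t ht)] at this
    exact this.antisymm (hI0 t ht)
  exact ((hle t ht).trans_eq (show K * I t = 0 by rw [hIt, mul_zero])).antisymm (hD0 t ht)

section

variable {H : Type*} [NormedAddCommGroup H] [NormedSpace ℝ H]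

theorem continuous_uncurry_apply_of_norm_le {X : Type*} [PseudoEMetricSpace X]
    {S : X → H →L[ℝ] H} {C : ℝ} (hS : ∀ x, Continuous fun t => S t x) (hC : ∀ t, ‖S t‖ ≤ C) :
    Continuous fun p : X × H => S p.1 p.2 := by
  have hC' : ∀ t, ‖S t‖₊ ≤ C.toNNReal := fun t => by
    rw [← NNReal.coe_le_coe, coe_nnnorm, Real.coe_toNNReal']
    exact (hC t).trans (le_max_left C 0)
  exact continuous_prod_of_continuous_lipschitzWith' _ C.toNNReal
    (fun t => (S t).lipschitz.weaken (hC' t)) hS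

variable {S : ℝ → H →L[ℝ] H} {C : ℝ}

theorem continuous_integral_apply_sub (hS : ∀ x, Continuous fun t => S t x)
    (hC : ∀ t, ‖S t‖ ≤ C) {f : ℝ → H} (hf : Continuous f) :
    Continuous fun t => ∫ s in (0 : ℝ)..t, S (t - s) (f s) :=
  intervalIntegral.continuous_parametric_intervalIntegral_of_continuous
    (f := fun t s => S (t - s) (f s))
    ((continuous_uncurry_apply_of_norm_le hS hC).comp
      ((continuous_fst.sub continuous_snd).prodMk (hf.comp continuous_snd))) continuous_id

theorem intervalIntegrable_apply_sub (hS : ∀ x, Continuous fun t => S t x)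
    (hC : ∀ t, ‖S t‖ ≤ C) {f : ℝ → H} (hf : Continuous f) (t a b : ℝ) :
    IntervalIntegrable (fun s => S (t - s) (f s)) volume a b :=
  ((continuous_uncurry_apply_of_norm_le hS hC).comp
    ((continuous_const.sub continuous_id).prodMk hf)).intervalIntegrable a b

theorem norm_integral_apply_sub_le (hC : ∀ t, ‖S t‖ ≤ C) {f : ℝ → H} (hf : Continuous f)
    {t : ℝ} (ht : 0 ≤ t) :
    ‖∫ s in (0 : ℝ)..t, S (t - s) (f s)‖ ≤ C * ∫ s in (0 : ℝ)..t, ‖f s‖ := by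
  rw [← intervalIntegral.integral_const_mul]
  refine intervalIntegral.norm_integral_le_of_norm_le ht (ae_of_all _ fun s _ => ?_)
    ((continuous_const.mul hf.norm).intervalIntegrable _ _)
  exact (S _).le_of_opNorm_le (hC _) _

theorem norm_integral_apply_sub_le_of_norm_le_exp (hC : ∀ t, ‖S t‖ ≤ C) {f : ℝ → H}
    (hf : Continuous f) {t L A : ℝ} (ht : 0 ≤ t) (hL : 0 < L)
    (hA : ∀ s ∈ Icc 0 t, ‖f s‖ ≤ A * exp (L * s)) :
    ‖∫ s in (0 : ℝ)..t, S (t - s) (f s)‖ ≤ C * A / L * exp (L * t) := by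
  have hC0 : 0 ≤ C := (norm_nonneg _).trans (hC 0)
  have hA0 : 0 ≤ A := by simpa using (norm_nonneg _).trans (hA 0 ⟨le_rfl, ht⟩)
  have hexp : ∫ s in (0 : ℝ)..t, A * exp (L * s) = A / L * (exp (L * t) - 1) := by
    rw [intervalIntegral.integral_const_mul, intervalIntegral.integral_comp_mul_left exp hL.ne',
      integral_exp, mul_zero, exp_zero, smul_eq_mul]
    ring
  calc ‖∫ s in (0 : ℝ)..t, S (t - s) (f s)‖ ≤ C * ∫ s in (0 : ℝ)..t, ‖f s‖ :=
        norm_integral_apply_sub_le hC hf ht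
    _ ≤ C * ∫ s in (0 : ℝ)..t, A * exp (L * s) := by
        gcongr
        exact intervalIntegral.integral_mono_on ht (hf.norm.intervalIntegrable _ _)
          ((by fun_prop : Continuous fun s => A * exp (L * s)).intervalIntegrable _ _) hA
    _ ≤ C * A / L * exp (L * t) := by
        rw [hexp, mul_div_assoc, mul_assoc]
        gcongr
        linarith

/-- Integrating only up to `max t 0` keeps `picard S F U₀ v` bounded on `(-∞, 0]`,
so that the contraction can run on bounded continuous functions on all of `ℝ`. -/
noncomputable def picard (S : ℝ → H →L[ℝ] H) (F : H → H) (U₀ : H) (v : ℝ → H) (t : ℝ) : H :=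
  S t U₀ + ∫ s in (0 : ℝ)..max t 0, S (max t 0 - s) (F (v s))

theorem continuous_picard (hS : ∀ x, Continuous fun t => S t x) (hC : ∀ t, ‖S t‖ ≤ C)
    {F : H → H} (hF : Continuous F) (U₀ : H) {v : ℝ → H} (hv : Continuous v) :
    Continuous (picard S F U₀ v) :=
  (hS U₀).add ((continuous_integral_apply_sub hS hC (hF.comp hv)).comp
    (continuous_id.max continuous_const))

theorem picard_sub_picard (hS : ∀ x, Continuous fun t => S t x) (hC : ∀ t, ‖S t‖ ≤ C)
    {F : H → H} (hF : Continuous F) (U₀ : H) {v₁ v₂ : ℝ → H} (hv₁ : Continuous v₁)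
    (hv₂ : Continuous v₂) (t : ℝ) :
    picard S F U₀ v₁ t - picard S F U₀ v₂ t =
      ∫ s in (0 : ℝ)..max t 0, S (max t 0 - s) (F (v₁ s) - F (v₂ s)) := by
  simp only [picard, map_sub]
  rw [intervalIntegral.integral_sub
    (intervalIntegrable_apply_sub hS hC (f := fun s => F (v₁ s)) (hF.comp hv₁) _ _ _)
    (intervalIntegrable_apply_sub hS hC (f := fun s => F (v₂ s)) (hF.comp hv₂) _ _ _)]
  abel

theorem exists_continuous_picard_fixedPoint [CompleteSpace H]
    (hS : ∀ x, Continuous fun t => S t x) (hC : ∀ t, ‖S t‖ ≤ C)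
    {F : H → H} {K : ℝ≥0} (hF : LipschitzWith K F) (U₀ : H) :
    ∃ U, Continuous U ∧ picard S F U₀ U = U := by
  have hC0 : 0 ≤ C := (norm_nonneg _).trans (hC 0)
  set L := C * K + 1
  have hL : 0 < L := by positivity
  have hκ : C * K / L < 1 := (div_lt_one hL).2 (lt_add_one _)
  refine exists_continuous_fixedPoint_of_weighted_contraction (w := fun t => exp (L * max t 0))
    (κ := ⟨C * K / L, by positivity⟩) (by fun_prop) (fun t => exp_pos _) (NNReal.coe_lt_coe.1 hκ)
    (fun v hv => continuous_picard hS hC hF.continuous U₀ hv)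
    ⟨C * ‖U₀‖ + C * ‖F 0‖ / L, fun t => ?_⟩ (fun v₁ v₂ hv₁ hv₂ M hM t => ?_)
  · have hw1 : 1 ≤ exp (L * max t 0) := one_le_exp (by positivity)
    have hF0 := norm_integral_apply_sub_le_of_norm_le_exp hC (f := fun _ => F 0)
      continuous_const (le_max_right t 0) hL (A := ‖F 0‖)
      fun s hs => le_mul_of_one_le_right (norm_nonneg _) (one_le_exp (by nlinarith [hs.1]))
    calc ‖picard S F U₀ 0 t‖
        ≤ ‖S t U₀‖ + ‖∫ s in (0 : ℝ)..max t 0, S (max t 0 - s) (F 0)‖ := norm_add_le _ _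
      _ ≤ C * ‖U₀‖ * exp (L * max t 0) + C * ‖F 0‖ / L * exp (L * max t 0) := by
          gcongr
          exact ((S t).le_of_opNorm_le (hC t) _).trans (le_mul_of_one_le_right (by positivity) hw1)
      _ = _ := by ring
  · have hdiff : ∀ s ∈ Icc 0 (max t 0), ‖F (v₁ s) - F (v₂ s)‖ ≤ K * M * exp (L * s) :=
      fun s hs => by
        have := hM s
        rw [max_eq_left hs.1] at this
        calc ‖F (v₁ s) - F (v₂ s)‖ ≤ K * ‖v₁ s - v₂ s‖ := by
              simpa only [dist_eq_norm] using hF.dist_le_mul (v₁ s) (v₂ s)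
          _ ≤ K * M * exp (L * s) := by rw [mul_assoc]; gcongr
    rw [picard_sub_picard hS hC hF.continuous U₀ hv₁ hv₂]
    calc _ ≤ C * (K * M) / L * exp (L * max t 0) :=
          norm_integral_apply_sub_le_of_norm_le_exp hC
            ((hF.continuous.comp hv₁).sub (hF.continuous.comp hv₂)) (le_max_right t 0) hL hdiff
      _ = C * K / L * M * exp (L * max t 0) := by ring

theorem eqOn_of_picard_eqOn (hS : ∀ x, Continuous fun t => S t x) (hC : ∀ t, ‖S t‖ ≤ C)
    {F : H → H} {K : ℝ≥0} (hF : LipschitzWith K F) (U₀ : H) {U V : ℝ → H}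
    (hU : Continuous U) (hV : Continuous V) (hUeq : EqOn (picard S F U₀ U) U (Ici 0))
    (hVeq : EqOn (picard S F U₀ V) V (Ici 0)) : EqOn V U (Ici 0) := by
  have hle : ∀ t, 0 ≤ t → ‖V t - U t‖ ≤ C * K * ∫ s in (0 : ℝ)..t, ‖V s - U s‖ := by
    intro t ht
    rw [← hVeq ht, ← hUeq ht, picard_sub_picard hS hC hF.continuous U₀ hV hU, max_eq_left ht,
      mul_assoc, ← intervalIntegral.integral_const_mul]
    have hFVU : Continuous fun s => F (V s) - F (U s) :=
      (hF.continuous.comp hV).sub (hF.continuous.comp hU)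
    refine (norm_integral_apply_sub_le hC hFVU ht).trans (mul_le_mul_of_nonneg_left ?_
      ((norm_nonneg _).trans (hC 0)))
    refine intervalIntegral.integral_mono_on ht (hFVU.norm.intervalIntegrable _ _)
      ((continuous_const.mul (hV.sub hU).norm).intervalIntegrable _ _) fun s _ => ?_
    simpa only [dist_eq_norm] using hF.dist_le_mul (V s) (U s)
  intro t ht
  exact sub_eq_zero.1 <| norm_eq_zero.1 <|
    eqOn_zero_of_le_mul_integral (hV.sub hU).norm (fun _ _ => norm_nonneg _) hle ht

theorem picard_max_eq {T : ℝ → H →L[ℝ] H} {F : H → H} {U₀ : H} {v w : ℝ → H} {t : ℝ}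
    (ht : 0 ≤ t) (hvw : EqOn v w (Icc 0 t)) :
    picard (fun t => T (max t 0)) F U₀ v t =
      T t U₀ + ∫ s in (0 : ℝ)..t, T (t - s) (F (w s)) := by
  simp only [picard, max_eq_left ht]
  congr 1
  refine intervalIntegral.integral_congr fun s hs => ?_
  rw [uIcc_of_le ht] at hs
  simp only [max_eq_left (sub_nonneg.2 hs.2), hvw hs]

end

theorem mild_solution_exists_unique_general
    {H : Type*} [NormedAddCommGroup H] [NormedSpace ℝ H] [CompleteSpace H]
    (T : ℝ → H →L[ℝ] H)
    (hTcont : ∀ x : H, ContinuousOn (fun t => T t x) (Set.Ici 0))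
    (c₀ : ℝ) (hTbdd : ∀ t, 0 ≤ t → ‖T t‖ ≤ c₀)
    (F : H → H) (K₀ : NNReal) (hF : LipschitzWith K₀ F)
    (U₀ : H) :
    ∃ U : ℝ → H,
      (ContinuousOn U (Set.Ici 0) ∧
        ∀ t, 0 ≤ t →
          U t = T t U₀ + ∫ s in (0 : ℝ)..t, T (t - s) (F (U s))) ∧
      ∀ V : ℝ → H,
        (ContinuousOn V (Set.Ici 0) ∧
          ∀ t, 0 ≤ t →
            V t = T t U₀ + ∫ s in (0 : ℝ)..t, T (t - s) (F (V s))) →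
        ∀ t, 0 ≤ t → V t = U t := by
  have hmax : Continuous fun t : ℝ => max t 0 := continuous_id.max continuous_const
  have hS : ∀ x, Continuous fun t => T (max t 0) x := fun x =>
    (hTcont x).comp_continuous hmax fun t => le_max_right t 0
  have hC : ∀ t, ‖T (max t 0)‖ ≤ c₀ := fun t => hTbdd _ (le_max_right t 0)
  obtain ⟨U, hUc, hU⟩ := exists_continuous_picard_fixedPoint hS hC hF U₀
  refine ⟨U, ⟨hUc.continuousOn, fun t ht => ?_⟩, fun V ⟨hVc, hV⟩ t ht => ?_⟩
  · rw [← picard_max_eq ht (eqOn_refl _ _), hU]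
  set W : ℝ → H := fun t => V (max t 0)
  have hWV : EqOn W V (Ici 0) := fun t ht => congrArg V (max_eq_left ht)
  have hWeq : EqOn (picard (fun t => T (max t 0)) F U₀ W) W (Ici 0) := fun t ht => by
    rw [picard_max_eq ht (hWV.mono Icc_subset_Ici_self), hWV ht, hV t ht]
  rw [← hWV ht]
  exact eqOn_of_picard_eqOn hS hC hF U₀ hUc (hVc.comp_continuous hmax fun t => le_max_right t 0)
    (fun t _ => congrFun hU t) hWeq ht

/-- Global existence and uniqueness of mild solutions: if
`T t` is a uniformly bounded strongly continuous family with `T 0 = I` and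
`F` is globally Lipschitz, then for every `U₀` there is a unique continuous
`U : [0,∞) → H` with `U(t) = T(t)U₀ + ∫₀ᵗ T(t−s)F(U(s)) ds`. -/
theorem mild_solution_exists_unique
    {H : Type*} [NormedAddCommGroup H] [NormedSpace ℝ H] [CompleteSpace H]
    (T : ℝ → H →L[ℝ] H)
    (hT0 : T 0 = ContinuousLinearMap.id ℝ H)
    (hTcont : ∀ x : H, ContinuousOn (fun t => T t x) (Set.Ici 0))
    (c₀ : ℝ) (hc₀ : 0 < c₀) (hTbdd : ∀ t, 0 ≤ t → ‖T t‖ ≤ c₀)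
    (F : H → H) (K₀ : NNReal) (hF : LipschitzWith K₀ F)
    (U₀ : H) :
    ∃ U : ℝ → H,
      (ContinuousOn U (Set.Ici 0) ∧
        ∀ t, 0 ≤ t →
          U t = T t U₀ + ∫ s in (0 : ℝ)..t, T (t - s) (F (U s))) ∧
      ∀ V : ℝ → H,
        (ContinuousOn V (Set.Ici 0) ∧
          ∀ t, 0 ≤ t →
            V t = T t U₀ + ∫ s in (0 : ℝ)..t, T (t - s) (F (V s))) →
        ∀ t, 0 ≤ t → V t = U t :=
  mild_solution_exists_unique_general T hTcont c₀ hTbdd F K₀ hF U₀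
end

section
/- For integers m, n ≥ 1 set N = 2m + 2n; let h(s) = 1 − 10s³ + 15s⁴ − 6s⁵; for R > 0 define φ_R : [0,∞) → ℝ by φ_R(r) = 1 for 0 ≤ r ≤ R, φ_R(r) = h((r−R)/R) + (1 − h((r−R)/R))·(R/r)^{N−1} for R < r < 2R, and φ_R(r) = (R/r)^{N−1} for r ≥ 2R. Then the three functions r ↦ r^{N−1} φ_R(r), r ↦ r^N φ_R′(r), and r ↦ r^{N+1} φ_R″(r) are bounded on [0,∞). -/
/-- The quintic Hermite transition polynomial `h(s) = 1 − 10s³ + 15s⁴ − 6s⁵`. -/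
noncomputable def hermiteQuintic (s : ℝ) : ℝ :=
  1 - 10 * s ^ 3 + 15 * s ^ 4 - 6 * s ^ 5

/-- The radial cutoff weight `φ_R`: equal to `1` for `r ≤ R`, a Hermite
interpolation on `(R, 2R)`, and the power decay `(R/r)^{N−1}` for `r ≥ 2R`. -/
noncomputable def radialCutoff (N : ℕ) (R r : ℝ) : ℝ :=
  if r ≤ R then 1
  else if r < 2 * R then
    hermiteQuintic ((r - R) / R)
      + (1 - hermiteQuintic ((r - R) / R)) * (R / r) ^ (N - 1)
  else (R / r) ^ (N - 1)

/-!
Write `t(r) = min 1 (max 0 ((r - R) / R))` and `K = N - 1`. For every `r`,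
`φ_R(r) = h(t) + (1 - h(t)) (R/r)^K`, and `h ∘ t` is `C²` because `h'` and `h''` vanish at `0`
and `1`. Differentiating `(R/r)^K` multiplies it by `-K/r`, then by `-(K+1)/r`, and
`r^K (R/r)^K = R^K`; so on `r > 0` each weighted derivative `r^(K+j) φ_R^(j)` is a linear
combination of `1 - h(t)`, which is bounded, and of terms `r^i h^(k)(t)` with `h^(k)(1) = 0`,
which vanish for `r ≥ 2R`. When `N = 0`, `φ_R ≡ 1`.
-/

open Set Filter Topology Asymptotics

theorem hasDerivAt_ite_le {f g f' g' : ℝ → ℝ} {a : ℝ} (hf : ∀ x, HasDerivAt f (f' x) x)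
    (hg : ∀ x, HasDerivAt g (g' x) x) (h₀ : f a = g a) (h₁ : f' a = g' a) (x : ℝ) :
    HasDerivAt (fun s => if s ≤ a then f s else g s) (if x ≤ a then f' x else g' x) x := by
  rcases lt_trichotomy x a with hx | rfl | hx
  · rw [if_pos hx.le]
    exact (hf x).congr_of_eventuallyEq <|
      eventually_of_mem (Iio_mem_nhds hx) fun s hs => if_pos (le_of_lt hs)
  · have hleft : HasDerivWithinAt (fun s => if s ≤ x then f s else g s) (f' x) (Iic x) x :=
      (hf x).hasDerivWithinAt.congr (fun s hs => if_pos hs) (if_pos le_rfl)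
    have hright : HasDerivWithinAt (fun s => if s ≤ x then f s else g s) (f' x) (Ici x) x := by
      refine (h₁ ▸ hg x).hasDerivWithinAt.congr (fun s hs => ?_) (by simp [h₀])
      rcases eq_or_lt_of_le (mem_Ici.mp hs) with rfl | hlt
      · simp [h₀]
      · exact if_neg (not_le.mpr hlt)
    have h := hleft.union hright
    rw [Iic_union_Ici, hasDerivWithinAt_univ] at h
    simpa using h
  · rw [if_neg (not_le.mpr hx)]
    exact (hg x).congr_of_eventuallyEq <|
      eventually_of_mem (Ioi_mem_nhds hx) fun s hs => if_neg (not_le.mpr hs)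

theorem hasDerivAt_comp_max {f f' : ℝ → ℝ} {a : ℝ} (hf : ∀ x, HasDerivAt f (f' x) x)
    (ha : f' a = 0) (x : ℝ) : HasDerivAt (fun s => f (max a s)) (f' (max a x)) x := by
  have key := hasDerivAt_ite_le (fun _ => hasDerivAt_const _ (f a)) hf rfl ha.symm x
  convert key using 1
  · ext s
    split_ifs with hs
    · rw [max_eq_left hs]
    · rw [max_eq_right (le_of_not_ge hs)]
  · split_ifs with hx
    · rw [max_eq_left hx, ha]
    · rw [max_eq_right (le_of_not_ge hx)]

theorem hasDerivAt_comp_min {f f' : ℝ → ℝ} {b : ℝ} (hf : ∀ x, HasDerivAt f (f' x) x)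
    (hb : f' b = 0) (x : ℝ) : HasDerivAt (fun s => f (min b s)) (f' (min b x)) x := by
  have key := hasDerivAt_ite_le hf (fun _ => hasDerivAt_const _ (f b)) rfl hb x
  convert key using 1
  · ext s
    split_ifs with hs
    · rw [min_eq_right hs]
    · rw [min_eq_left (le_of_not_ge hs)]
  · split_ifs with hx
    · rw [min_eq_right hx]
    · rw [min_eq_left (le_of_not_ge hx), hb]

theorem hasDerivAt_comp_clamp {f f' : ℝ → ℝ} {a b : ℝ} (hab : a ≤ b)
    (hf : ∀ x, HasDerivAt f (f' x) x) (ha : f' a = 0) (hb : f' b = 0) (x : ℝ) :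
    HasDerivAt (fun s => f (min b (max a s))) (f' (min b (max a x))) x :=
  hasDerivAt_comp_max (hasDerivAt_comp_min hf hb) (by rwa [min_eq_right hab]) x

noncomputable def hermiteQuinticDeriv (s : ℝ) : ℝ := -30 * s ^ 2 * (1 - s) ^ 2

noncomputable def hermiteQuinticDeriv2 (s : ℝ) : ℝ := -60 * s * (1 - s) * (1 - 2 * s)

theorem hasDerivAt_hermiteQuintic (s : ℝ) :
    HasDerivAt hermiteQuintic (hermiteQuinticDeriv s) s := by
  refine (((((hasDerivAt_pow 3 s).const_mul 10).const_sub 1).fun_add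
    ((hasDerivAt_pow 4 s).const_mul 15)).fun_sub ((hasDerivAt_pow 5 s).const_mul 6)).congr_deriv ?_
  simp only [hermiteQuinticDeriv]
  push_cast
  ring

theorem hasDerivAt_hermiteQuinticDeriv (s : ℝ) :
    HasDerivAt hermiteQuinticDeriv (hermiteQuinticDeriv2 s) s := by
  refine (((hasDerivAt_pow 2 s).const_mul (-30)).fun_mul
    (((hasDerivAt_id' s).const_sub 1).fun_pow 2)).congr_deriv ?_
  simp only [hermiteQuinticDeriv2]
  push_cast
  ring

noncomputable def radialPosition (R r : ℝ) : ℝ := min 1 (max 0 ((r - R) / R))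

theorem hasDerivAt_comp_radialPosition {p p' : ℝ → ℝ} (hp : ∀ x, HasDerivAt p (p' x) x)
    (h₀ : p' 0 = 0) (h₁ : p' 1 = 0) (R r : ℝ) :
    HasDerivAt (fun x => p (radialPosition R x)) (p' (radialPosition R r) / R) r := by
  have hs : HasDerivAt (fun x => (x - R) / R) (1 / R) r :=
    ((hasDerivAt_id r).sub_const R).div_const R
  exact ((hasDerivAt_comp_clamp zero_le_one hp h₀ h₁ _).comp r hs).congr_deriv (mul_one_div _ _)

theorem radialPosition_of_le {R r : ℝ} (hR : 0 < R) (hr : r ≤ R) : radialPosition R r = 0 := by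
  have : (r - R) / R ≤ 0 := div_nonpos_of_nonpos_of_nonneg (by linarith) hR.le
  simp [radialPosition, max_eq_left this]

theorem radialPosition_of_two_mul_le {R r : ℝ} (hR : 0 < R) (hr : 2 * R ≤ r) :
    radialPosition R r = 1 := by
  have : 1 ≤ (r - R) / R := by rw [le_div_iff₀ hR]; linarith
  simp [radialPosition, min_eq_left (this.trans (le_max_right 0 _))]

theorem radialPosition_of_mem_Ioo {R r : ℝ} (hR : 0 < R) (h₁ : R < r) (h₂ : r < 2 * R) :
    radialPosition R r = (r - R) / R := by
  have h0 : 0 ≤ (r - R) / R := div_nonneg (by linarith) hR.le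
  have h1 : (r - R) / R ≤ 1 := by rw [div_le_one hR]; linarith
  simp [radialPosition, max_eq_right h0, min_eq_right h1]

theorem radialPosition_mem_Icc (R r : ℝ) : radialPosition R r ∈ Icc 0 1 :=
  ⟨le_min zero_le_one (le_max_left _ _), min_le_left _ _⟩

theorem radialCutoff_eq {N : ℕ} {R : ℝ} (hR : 0 < R) (r : ℝ) :
    radialCutoff N R r = hermiteQuintic (radialPosition R r)
      + (1 - hermiteQuintic (radialPosition R r)) * (R / r) ^ (N - 1) := by
  unfold radialCutoff
  split_ifs with h₁ h₂
  · simp [radialPosition_of_le hR h₁, hermiteQuintic]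
  · rw [radialPosition_of_mem_Ioo hR (not_le.mp h₁) h₂]
  · rw [radialPosition_of_two_mul_le hR (not_lt.mp h₂)]
    norm_num [hermiteQuintic]

theorem radialCutoff_zero (R : ℝ) : radialCutoff 0 R = fun _ => 1 := by
  funext r
  unfold radialCutoff
  split_ifs <;> simp

theorem hasDerivAt_div_pow (K : ℕ) (R : ℝ) {r : ℝ} (hr : r ≠ 0) :
    HasDerivAt (fun x => (R / x) ^ K) (-(K * (R / r) ^ K / r)) r := by
  have h := ((hasDerivAt_inv hr).const_mul R).fun_pow K
  simp only [← div_eq_mul_inv] at h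
  refine h.congr_deriv ?_
  rcases K.eq_zero_or_pos with rfl | hK
  · simp
  · rw [← pow_sub_one_mul hK.ne' (R / r)]
    field_simp

theorem hasDerivAt_mul_div_pow_div (K : ℕ) (R : ℝ) {r : ℝ} (hr : r ≠ 0) :
    HasDerivAt (fun x => K * (R / x) ^ K / x) (-(K * (K + 1) * (R / r) ^ K / r ^ 2)) r := by
  refine (((hasDerivAt_div_pow K R hr).const_mul (K : ℝ)).fun_div
    (hasDerivAt_id' r) hr).congr_deriv ?_
  field_simp
  ring

theorem hasDerivAt_hermiteQuintic_radialPosition (R r : ℝ) :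
    HasDerivAt (fun x => hermiteQuintic (radialPosition R x))
      (hermiteQuinticDeriv (radialPosition R r) / R) r :=
  hasDerivAt_comp_radialPosition hasDerivAt_hermiteQuintic
    (by norm_num [hermiteQuinticDeriv]) (by norm_num [hermiteQuinticDeriv]) R r

theorem hasDerivAt_hermiteQuinticDeriv_radialPosition (R r : ℝ) :
    HasDerivAt (fun x => hermiteQuinticDeriv (radialPosition R x))
      (hermiteQuinticDeriv2 (radialPosition R r) / R) r :=
  hasDerivAt_comp_radialPosition hasDerivAt_hermiteQuinticDeriv
    (by norm_num [hermiteQuinticDeriv2]) (by norm_num [hermiteQuinticDeriv2]) R r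

noncomputable def radialCutoffDeriv (K : ℕ) (R r : ℝ) : ℝ :=
  hermiteQuinticDeriv (radialPosition R r) / R * (1 - (R / r) ^ K)
    - (1 - hermiteQuintic (radialPosition R r)) * (K * (R / r) ^ K / r)

theorem hasDerivAt_radialCutoff {K : ℕ} {R r : ℝ} (hR : 0 < R) (hr : r ≠ 0) :
    HasDerivAt (radialCutoff (K + 1) R) (radialCutoffDeriv K R r) r := by
  have hH := hasDerivAt_hermiteQuintic_radialPosition R r
  rw [show radialCutoff (K + 1) R = _ from funext (radialCutoff_eq hR)]
  refine (hH.fun_add ((hH.const_sub 1).fun_mul (hasDerivAt_div_pow K R hr))).congr_deriv ?_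
  simp only [radialCutoffDeriv]
  ring

noncomputable def radialCutoffDeriv2 (K : ℕ) (R r : ℝ) : ℝ :=
  hermiteQuinticDeriv2 (radialPosition R r) / R / R * (1 - (R / r) ^ K)
    + 2 * (hermiteQuinticDeriv (radialPosition R r) / R) * (K * (R / r) ^ K / r)
    + (1 - hermiteQuintic (radialPosition R r)) * (K * (K + 1) * (R / r) ^ K / r ^ 2)

theorem hasDerivAt_radialCutoffDeriv {K : ℕ} {R r : ℝ} (hr : r ≠ 0) :
    HasDerivAt (radialCutoffDeriv K R) (radialCutoffDeriv2 K R r) r := by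
  have hH := hasDerivAt_hermiteQuintic_radialPosition R r
  have hH' := (hasDerivAt_hermiteQuinticDeriv_radialPosition R r).div_const R
  refine ((hH'.fun_mul ((hasDerivAt_div_pow K R hr).const_sub 1)).fun_sub
    ((hH.const_sub 1).fun_mul (hasDerivAt_mul_div_pow_div K R hr))).congr_deriv ?_
  simp only [radialCutoffDeriv2]
  ring

theorem deriv_radialCutoff {K : ℕ} {R r : ℝ} (hR : 0 < R) (hr : 0 < r) :
    deriv (radialCutoff (K + 1) R) r = radialCutoffDeriv K R r :=
  (hasDerivAt_radialCutoff hR hr.ne').deriv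

theorem deriv_deriv_radialCutoff {K : ℕ} {R r : ℝ} (hR : 0 < R) (hr : 0 < r) :
    deriv (deriv (radialCutoff (K + 1) R)) r = radialCutoffDeriv2 K R r := by
  have h : deriv (radialCutoff (K + 1) R) =ᶠ[𝓝 r] radialCutoffDeriv K R :=
    eventually_of_mem (Ioi_mem_nhds hr) fun x hx => deriv_radialCutoff hR hx
  rw [h.deriv_eq]
  exact (hasDerivAt_radialCutoffDeriv hr.ne').deriv

theorem isBigO_comp_radialPosition {p : ℝ → ℝ} (hp : Continuous p) (R : ℝ) (l : Filter ℝ) :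
    (fun r => p (radialPosition R r)) =O[l] (fun _ => (1 : ℝ)) := by
  obtain ⟨C, hC⟩ := isCompact_Icc.exists_bound_of_continuousOn hp.continuousOn
  exact .of_bound C (.of_forall fun r => by simpa using hC _ (radialPosition_mem_Icc R r))

theorem isBigO_pow_mul_comp_radialPosition {p : ℝ → ℝ} (hp : Continuous p) (hp₁ : p 1 = 0)
    {R : ℝ} (hR : 0 < R) (j : ℕ) :
    (fun r => r ^ j * p (radialPosition R r)) =O[𝓟 (Ici 0)] (fun _ => (1 : ℝ)) := by
  obtain ⟨C, hC⟩ := isCompact_Icc.exists_bound_of_continuousOn hp.continuousOn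
  have hC' (r : ℝ) : ‖p (radialPosition R r)‖ ≤ C := hC _ (radialPosition_mem_Icc R r)
  refine isBigO_principal.2 ⟨(2 * R) ^ j * C, fun r hr => ?_⟩
  rw [norm_one, mul_one, norm_mul, norm_pow, Real.norm_of_nonneg hr]
  rcases le_or_gt r (2 * R) with h | h
  · exact mul_le_mul (pow_le_pow_left₀ hr h j) (hC' r) (norm_nonneg _) (by positivity)
  · rw [radialPosition_of_two_mul_le hR h.le, hp₁, norm_zero, mul_zero]
    exact mul_nonneg (by positivity) ((norm_nonneg _).trans (hC' 0))

theorem isBigO_one_sub_hermiteQuintic_radialPosition (R : ℝ) (l : Filter ℝ) :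
    (fun r => 1 - hermiteQuintic (radialPosition R r)) =O[l] (fun _ => (1 : ℝ)) :=
  isBigO_comp_radialPosition (p := fun s => 1 - hermiteQuintic s)
    (by unfold hermiteQuintic; fun_prop) R l

section WeightedBounds

variable {R : ℝ}

theorem isBigO_pow_mul_hermiteQuintic_radialPosition (hR : 0 < R) (j : ℕ) :
    (fun r => r ^ j * hermiteQuintic (radialPosition R r)) =O[𝓟 (Ioi 0)] (fun _ => (1 : ℝ)) :=
  (isBigO_pow_mul_comp_radialPosition (by unfold hermiteQuintic; fun_prop)
    (by norm_num [hermiteQuintic]) hR j).mono (principal_mono.2 Ioi_subset_Ici_self)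

theorem isBigO_pow_mul_hermiteQuinticDeriv_radialPosition (hR : 0 < R) (j : ℕ) :
    (fun r => r ^ j * hermiteQuinticDeriv (radialPosition R r)) =O[𝓟 (Ioi 0)]
      (fun _ => (1 : ℝ)) :=
  (isBigO_pow_mul_comp_radialPosition (by unfold hermiteQuinticDeriv; fun_prop)
    (by norm_num [hermiteQuinticDeriv]) hR j).mono (principal_mono.2 Ioi_subset_Ici_self)

theorem isBigO_pow_mul_hermiteQuinticDeriv2_radialPosition (hR : 0 < R) (j : ℕ) :
    (fun r => r ^ j * hermiteQuinticDeriv2 (radialPosition R r)) =O[𝓟 (Ioi 0)]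
      (fun _ => (1 : ℝ)) :=
  (isBigO_pow_mul_comp_radialPosition (by unfold hermiteQuinticDeriv2; fun_prop)
    (by norm_num [hermiteQuinticDeriv2]) hR j).mono (principal_mono.2 Ioi_subset_Ici_self)

variable {K : ℕ}

theorem isBigO_pow_mul_radialCutoff (hR : 0 < R) :
    (fun r => r ^ K * radialCutoff (K + 1) R r) =O[𝓟 (Ioi 0)] (fun _ => (1 : ℝ)) := by
  refine ((isBigO_pow_mul_hermiteQuintic_radialPosition hR K).add
    ((isBigO_one_sub_hermiteQuintic_radialPosition R _).const_mul_left (R ^ K))).congr'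
    (eventuallyEq_principal.2 fun r (hr : 0 < r) => ?_) .rfl
  simp only [radialCutoff_eq hR, Nat.add_sub_cancel, div_pow]
  field_simp

theorem isBigO_pow_mul_deriv_radialCutoff (hR : 0 < R) :
    (fun r => r ^ (K + 1) * deriv (radialCutoff (K + 1) R) r) =O[𝓟 (Ioi 0)]
      (fun _ => (1 : ℝ)) := by
  have hH₁ := isBigO_pow_mul_hermiteQuinticDeriv_radialPosition hR
  -- `r^(K+1) φ' = R⁻¹ r^(K+1) h'(t) - R^(K-1) r h'(t) - K R^K (1 - h(t))`
  refine ((((hH₁ (K + 1)).const_mul_left R⁻¹).sub ((hH₁ 1).const_mul_left (R ^ K / R))).sub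
    ((isBigO_one_sub_hermiteQuintic_radialPosition R _).const_mul_left (K * R ^ K))).congr'
    (eventuallyEq_principal.2 fun r (hr : 0 < r) => ?_) .rfl
  simp only [deriv_radialCutoff hR hr, radialCutoffDeriv, div_pow]
  field_simp
  ring

theorem isBigO_pow_mul_deriv_deriv_radialCutoff (hR : 0 < R) :
    (fun r => r ^ (K + 2) * deriv (deriv (radialCutoff (K + 1) R)) r) =O[𝓟 (Ioi 0)]
      (fun _ => (1 : ℝ)) := by
  have hH₁ := isBigO_pow_mul_hermiteQuinticDeriv_radialPosition hR
  have hH₂ := isBigO_pow_mul_hermiteQuinticDeriv2_radialPosition hR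
  -- `r^(K+2) φ'' = R⁻² r^(K+2) h''(t) - R^(K-2) r² h''(t) + 2K R^(K-1) r h'(t)`
  --   `+ K(K+1) R^K (1 - h(t))`
  refine (((((hH₂ (K + 2)).const_mul_left (R ^ 2)⁻¹).sub
    ((hH₂ 2).const_mul_left (R ^ K / R ^ 2))).add
    ((hH₁ 1).const_mul_left (2 * K * R ^ K / R))).add
    ((isBigO_one_sub_hermiteQuintic_radialPosition R _).const_mul_left
      (K * (K + 1) * R ^ K))).congr'
    (eventuallyEq_principal.2 fun r (hr : 0 < r) => ?_) .rfl
  simp only [deriv_deriv_radialCutoff hR hr, radialCutoffDeriv2, div_pow]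
  field_simp
  ring

end WeightedBounds

theorem exists_abs_le_of_isBigO_Ioi {f : ℝ → ℝ} (h : f =O[𝓟 (Ioi 0)] (fun _ => (1 : ℝ))) :
    ∃ C, ∀ r ∈ Ici (0 : ℝ), |f r| ≤ C := by
  obtain ⟨c, hc⟩ := isBigO_principal.1 h
  refine ⟨max c |f 0|, fun r hr => ?_⟩
  rcases (mem_Ici.1 hr).eq_or_lt with rfl | hr
  · exact le_max_right _ _
  · simpa using (hc r hr).trans_eq (by simp) |>.trans (le_max_left _ _)

theorem radialCutoff_weighted_bounds_general
    (N : ℕ)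
    (R : ℝ) (hR : 0 < R) :
    (∃ C : ℝ, ∀ r ∈ Set.Ici (0 : ℝ),
      |r ^ (N - 1) * radialCutoff N R r| ≤ C) ∧
    (∃ C : ℝ, ∀ r ∈ Set.Ici (0 : ℝ),
      |r ^ N * deriv (radialCutoff N R) r| ≤ C) ∧
    (∃ C : ℝ, ∀ r ∈ Set.Ici (0 : ℝ),
      |r ^ (N + 1) * deriv (deriv (radialCutoff N R)) r| ≤ C) := by
  rcases N with _ | K
  · simp only [radialCutoff_zero, deriv_const', mul_zero, abs_zero]
    exact ⟨⟨1, by simp⟩, ⟨0, by simp⟩, ⟨0, by simp⟩⟩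
  · exact ⟨exists_abs_le_of_isBigO_Ioi (isBigO_pow_mul_radialCutoff hR),
      exists_abs_le_of_isBigO_Ioi (isBigO_pow_mul_deriv_radialCutoff hR),
      exists_abs_le_of_isBigO_Ioi (isBigO_pow_mul_deriv_deriv_radialCutoff hR)⟩

/-- For `N = 2m + 2n` (`m, n ≥ 1`) and `R > 0`, the weighted
functions `r^{N−1}φ_R(r)`, `r^N φ_R′(r)` and `r^{N+1} φ_R″(r)` are bounded on
`[0,∞)`. -/
theorem radialCutoff_weighted_bounds
    (m n : ℕ) (hm : 1 ≤ m) (hn : 1 ≤ n) (N : ℕ) (hN : N = 2 * m + 2 * n)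
    (R : ℝ) (hR : 0 < R) :
    (∃ C : ℝ, ∀ r ∈ Set.Ici (0 : ℝ),
      |r ^ (N - 1) * radialCutoff N R r| ≤ C) ∧
    (∃ C : ℝ, ∀ r ∈ Set.Ici (0 : ℝ),
      |r ^ N * deriv (radialCutoff N R) r| ≤ C) ∧
    (∃ C : ℝ, ∀ r ∈ Set.Ici (0 : ℝ),
      |r ^ (N + 1) * deriv (deriv (radialCutoff N R)) r| ≤ C) :=
  radialCutoff_weighted_bounds_general N R hR
end
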